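/- arXiv:1805.01606 — 5 statements merged into one kernel-verified Lean document; each statement's English description precedes it below -/
import Mathlib

section
/- For coprime positive integers m, n, the number of lattice paths from (0,0) to (m,n) using unit horizontal steps (1,0) and unit vertical steps (0,1) that stay weakly above the diagonal line y = (n/m)x equals (1/(m+n)) * binomial(m+n, n) (the rational Catalan number). -/
open scoped Classical
open Finset

/-- A lattice path is encoded as a list of steps: `false` = horizontal step `(1,0)`,
`true` = vertical step `(0,1)`.  `IsDyck m n w` says `w` is an `(m,n)`-Dyck path:
it has `m` horizontal and `n` vertical steps and every intermediate lattice point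
`(x,y)` satisfies `n*x ≤ m*y` (the path stays weakly above the diagonal `y=(n/m)x`). -/
def IsDyck (m n : ℕ) (w : List Bool) : Prop :=
  w.count false = m ∧ w.count true = n ∧
    ∀ p ∈ w.inits, n * p.count false ≤ m * p.count true

/-- `x`-coordinate of the point of the path reached after the first `i` steps. -/
def ptX (w : List Bool) (i : ℕ) : ℤ := ((w.take i).count false : ℤ)

/-- `y`-coordinate of the point of the path reached after the first `i` steps. -/
def ptY (w : List Bool) (i : ℕ) : ℤ := ((w.take i).count true : ℤ)

/-- `O(γ)`: pairs `(i,j)` of a horizontal step `i` and a vertical step `j`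
appearing later in the path. -/
def Opairs (w : List Bool) : Finset (ℕ × ℕ) :=
  (Finset.range w.length ×ˢ Finset.range w.length).filter
    (fun ij => ij.1 < ij.2 ∧ w[ij.1]? = some false ∧ w[ij.2]? = some true)

/-- The set of (bottom-left corners of) complete unit lattice squares lying between the
path and the diagonal `y = (n/m)x`: the square `[x,x+1]×[y,y+1]` lies weakly above the
diagonal and strictly below the path. -/
noncomputable def areaSet (m n : ℕ) (w : List Bool) : Finset (ℕ × ℕ) :=
  ((Finset.range m) ×ˢ (Finset.range n)).filter (fun xy =>
    n * (xy.1 + 1) ≤ m * xy.2 ∧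
    ∃ i < w.length, w[i]? = some false ∧
      (w.take (i+1)).count false = xy.1 + 1 ∧ xy.2 + 1 ≤ (w.take (i+1)).count true)

/-- `area(γ)`: the number of complete unit lattice squares between the path and the
diagonal. -/
noncomputable def area (m n : ℕ) (w : List Bool) : ℕ := (areaSet m n w).card

/-- Some line of slope `n/m` (i.e. `{(x,y) | n*x - m*y = c}`) meets both the closed
horizontal step segment `i` and the closed vertical step segment `j`. -/
def MeetsBoth (m n : ℕ) (w : List Bool) (i j : ℕ) : Prop :=
  ∃ c : ℝ,
    (∃ x : ℝ, (ptX w i : ℝ) ≤ x ∧ x ≤ (ptX w i : ℝ) + 1 ∧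
      (n : ℝ) * x - (m : ℝ) * (ptY w i : ℝ) = c) ∧
    (∃ y : ℝ, (ptY w j : ℝ) ≤ y ∧ y ≤ (ptY w j : ℝ) + 1 ∧
      (n : ℝ) * (ptX w j : ℝ) - (m : ℝ) * y = c)

/-- Condition (1A): the line of slope `n/m` through the left endpoint `(a-1,b)` of the
horizontal step `i` meets the closed vertical step segment `j`. -/
def Cond1A (m n : ℕ) (w : List Bool) (i j : ℕ) : Prop :=
  ∃ y : ℝ, (ptY w j : ℝ) ≤ y ∧ y ≤ (ptY w j : ℝ) + 1 ∧
    (n : ℝ) * ((ptX w j : ℝ) - (ptX w i : ℝ)) = (m : ℝ) * (y - (ptY w i : ℝ))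

/-- Condition (2A): the line of slope `n/m` through the top endpoint `(a',b'+1)` of the
vertical step `j` meets the closed horizontal step segment `i`. -/
def Cond2A (m n : ℕ) (w : List Bool) (i j : ℕ) : Prop :=
  ∃ x : ℝ, (ptX w i : ℝ) ≤ x ∧ x ≤ (ptX w i : ℝ) + 1 ∧
    (n : ℝ) * (x - (ptX w j : ℝ)) = (m : ℝ) * ((ptY w i : ℝ) - ((ptY w j : ℝ) + 1))

/-- `H(γ)`: pairs in `O(γ)` admitting a common transversal line parallel to the
diagonal. -/
noncomputable def Hpairs (m n : ℕ) (w : List Bool) : Finset (ℕ × ℕ) :=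
  (Opairs w).filter (fun ij => MeetsBoth m n w ij.1 ij.2)

/-- `H₁(γ)`: pairs in `O(γ)` satisfying condition (1A). -/
noncomputable def H1pairs (m n : ℕ) (w : List Bool) : Finset (ℕ × ℕ) :=
  (Opairs w).filter (fun ij => Cond1A m n w ij.1 ij.2)

/-- `H₂(γ)`: pairs in `O(γ)` satisfying condition (2A). -/
noncomputable def H2pairs (m n : ℕ) (w : List Bool) : Finset (ℕ × ℕ) :=
  (Opairs w).filter (fun ij => Cond2A m n w ij.1 ij.2)

/-- The line of slope `n/m` through the point `(px,py)` meets the closed segment of the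
horizontal step `i`. -/
def lineHitsH (m n : ℕ) (w : List Bool) (px py : ℤ) (i : ℕ) : Prop :=
  w[i]? = some false ∧
    ∃ x : ℝ, (ptX w i : ℝ) ≤ x ∧ x ≤ (ptX w i : ℝ) + 1 ∧
      (n : ℝ) * (x - (px : ℝ)) = (m : ℝ) * ((ptY w i : ℝ) - (py : ℝ))

/-- The line of slope `n/m` through the point `(px,py)` meets the closed segment of the
vertical step `j`. -/
def lineHitsV (m n : ℕ) (w : List Bool) (px py : ℤ) (j : ℕ) : Prop :=
  w[j]? = some true ∧
    ∃ y : ℝ, (ptY w j : ℝ) ≤ y ∧ y ≤ (ptY w j : ℝ) + 1 ∧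
      (n : ℝ) * ((ptX w j : ℝ) - (px : ℝ)) = (m : ℝ) * (y - (py : ℝ))

/-- Outer vertices of the path, encoded by the index `j` of a vertical step that is
immediately followed by a horizontal step; the vertex itself is the point
`(ptX w (j+1), ptY w (j+1))`. -/
def outerIdx (w : List Bool) : Finset ℕ :=
  (Finset.range w.length).filter
    (fun j => w[j]? = some true ∧ w[j+1]? = some false)

/-- The perpendicular distance from the diagonal of the outer vertex indexed by `j`,
measured by `m*y - n*x` (proportional to the true distance). -/
def diagDist (m n : ℕ) (w : List Bool) (j : ℕ) : ℤ :=
  (m : ℤ) * ptY w (j+1) - (n : ℤ) * ptX w (j+1)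

/-- `V(γ)`: outer vertices other than one farthest from the diagonal. -/
def Vset (m n : ℕ) (w : List Bool) : Finset ℕ :=
  (outerIdx w).filter (fun j => ∃ j' ∈ outerIdx w, diagDist m n w j < diagDist m n w j')

/-- `k(p)`: the number of horizontal steps of the path, other than the horizontal step
starting at the outer vertex `p` (indexed by `j`), met by the line of slope `n/m`
through `p`. -/
noncomputable def kH (m n : ℕ) (w : List Bool) (j : ℕ) : ℕ :=
  ((Finset.range w.length).filter
    (fun i => i ≠ j + 1 ∧ lineHitsH m n w (ptX w (j+1)) (ptY w (j+1)) i)).card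

/-- The number of vertical steps of the path, other than the vertical step ending at the
outer vertex `p` (indexed by `j`), met by the line of slope `n/m` through `p`. -/
noncomputable def kV (m n : ℕ) (w : List Bool) (j : ℕ) : ℕ :=
  ((Finset.range w.length).filter
    (fun i => i ≠ j ∧ lineHitsV m n w (ptX w (j+1)) (ptY w (j+1)) i)).card

/-- `k₁(p)`: the number of vertical steps occurring after the outer vertex `p`
(indexed by `j`) met by the line of slope `n/m` through `p`. -/
noncomputable def k1 (m n : ℕ) (w : List Bool) (j : ℕ) : ℕ :=
  ((Finset.range w.length).filter
    (fun i => j < i ∧ lineHitsV m n w (ptX w (j+1)) (ptY w (j+1)) i)).card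

/-- `k₂(p)`: the number of horizontal steps occurring before the outer vertex `p`
(indexed by `j`) met by the line of slope `n/m` through `p`. -/
noncomputable def k2 (m n : ℕ) (w : List Bool) (j : ℕ) : ℕ :=
  ((Finset.range w.length).filter
    (fun i => i ≤ j ∧ lineHitsH m n w (ptX w (j+1)) (ptY w (j+1)) i)).card

/-- The insertion map `γ ↦ γ*`: insert one horizontal step immediately after each
vertical step. -/
def star : List Bool → List Bool
  | [] => []
  | true :: w => true :: false :: star w
  | false :: w => false :: star w

/-- The index in `γ*` of the step corresponding to the step of index `i` in `γ`. -/
def starIdx (w : List Bool) (i : ℕ) : ℕ := i + (w.take i).count true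

/-- A Dyck path is rugged if every vertical step is immediately followed by a
horizontal step. -/
def Rugged (w : List Bool) : Prop :=
  ∀ i, w[i]? = some true → w[i+1]? = some false

/-!
Cycle lemma. Give a horizontal step height `-n` and a vertical one height `m`. A word with `m`
horizontal and `n` vertical steps then has total height `0`, and it is a Dyck path iff all its
prefixes have nonnegative height; its rotation starting at position `k` is a Dyck path iff the
prefix of length `k` has minimal height. A prefix of length `i` with `y` vertical steps has
height `(m + n) y - n i`, so, as `gcd(m + n, n) = 1`, the prefixes of lengths `i < m + n` have
pairwise distinct heights. Hence exactly one of the `m + n` rotations of each of the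
`choose (m + n) n` words is a Dyck path, and counting the pairs (word, rotation that is a Dyck
path) in both ways gives `(m + n) · #Dyck = choose (m + n) n`.
-/

def pathHeight (m n : ℕ) (w : List Bool) : ℤ := m * w.count true - n * w.count false

section PathHeight

variable (m n : ℕ)

@[simp]
lemma pathHeight_nil : pathHeight m n [] = 0 := by simp [pathHeight]

lemma pathHeight_append (u v : List Bool) :
    pathHeight m n (u ++ v) = pathHeight m n u + pathHeight m n v := by
  simp only [pathHeight, List.count_append]; push_cast; ring

lemma length_eq_of_count {w : List Bool} (hf : w.count false = m) (ht : w.count true = n) :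
    w.length = m + n := by
  rw [← List.count_false_add_count_true, hf, ht]

lemma pathHeight_eq_zero {w : List Bool} (hf : w.count false = m) (ht : w.count true = n) :
    pathHeight m n w = 0 := by
  simp only [pathHeight, hf, ht]; ring

lemma isDyck_iff_pathHeight (w : List Bool) :
    IsDyck m n w ↔ w.count false = m ∧ w.count true = n ∧
      ∀ i ≤ w.length, 0 ≤ pathHeight m n (w.take i) := by
  have nonneg_iff (p : List Bool) :
      n * p.count false ≤ m * p.count true ↔ 0 ≤ pathHeight m n p := by
    rw [pathHeight, sub_nonneg]; exact_mod_cast Nat.cast_le.symm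
  refine and_congr_right' (and_congr_right' ⟨fun h i _ => ?_, fun h p hp => ?_⟩)
  · exact (nonneg_iff _).1 (h _ ((List.mem_inits _ _).2 (List.take_prefix i w)))
  · have hpre := (List.mem_inits _ _).1 hp
    rw [nonneg_iff, List.prefix_iff_eq_take.1 hpre]
    exact h _ hpre.length_le

lemma pathHeight_take_rotate_of_add_le {w : List Bool} {k j : ℕ} (h : k + j ≤ w.length) :
    pathHeight m n ((w.rotate k).take j) =
      pathHeight m n (w.take (k + j)) - pathHeight m n (w.take k) := by
  rw [List.rotate_eq_drop_append_take (by omega), List.take_append_of_le_length (by simp; omega),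
    List.take_add, pathHeight_append]
  ring

lemma pathHeight_take_rotate_of_le_add {w : List Bool} {k j : ℕ} (hk : k ≤ w.length)
    (hj : j ≤ w.length) (h : w.length ≤ k + j) :
    pathHeight m n ((w.rotate k).take j) =
      pathHeight m n w + pathHeight m n (w.take (k + j - w.length)) -
        pathHeight m n (w.take k) := by
  have hdrop : pathHeight m n (w.drop k) = pathHeight m n w - pathHeight m n (w.take k) := by
    rw [← List.take_append_drop k w, pathHeight_append, List.take_append_drop]; ring
  rw [List.rotate_eq_drop_append_take hk, List.take_append, List.take_of_length_le (by simp; omega),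
    List.take_take, pathHeight_append, hdrop, List.length_drop,
    show min (j - (w.length - k)) k = k + j - w.length by omega]
  ring

lemma isDyck_rotate_iff {w : List Bool} (hf : w.count false = m) (ht : w.count true = n)
    {k : ℕ} (hk : k ≤ m + n) :
    IsDyck m n (w.rotate k) ↔
      ∀ i ≤ m + n, pathHeight m n (w.take k) ≤ pathHeight m n (w.take i) := by
  have hlen := length_eq_of_count m n hf ht
  have hw := pathHeight_eq_zero m n hf ht
  have hperm := List.rotate_perm w k
  rw [isDyck_iff_pathHeight, hperm.count_eq, hperm.count_eq, List.length_rotate, hlen]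
  refine ⟨fun ⟨_, _, h⟩ i hi => ?_, fun h => ⟨hf, ht, fun j hj => ?_⟩⟩
  · rcases le_or_gt k i with hki | hik
    · have := h (i - k) (by omega)
      rw [pathHeight_take_rotate_of_add_le m n (by omega), Nat.add_sub_cancel' hki] at this
      linarith
    · have := h (m + n - k + i) (by omega)
      rw [pathHeight_take_rotate_of_le_add m n (by omega) (by omega) (by omega), hw, hlen,
        show k + (m + n - k + i) - (m + n) = i by omega] at this
      linarith
  · rcases le_or_gt (k + j) (m + n) with hkj | hkj
    · rw [pathHeight_take_rotate_of_add_le m n (by omega)]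
      linarith [h (k + j) hkj]
    · rw [pathHeight_take_rotate_of_le_add m n (by omega) (by omega) (by omega), hw, hlen]
      linarith [h (k + j - (m + n)) (by omega)]

lemma eq_of_pathHeight_take_eq {m n : ℕ} (hmn : m.Coprime n) {w : List Bool} {i j : ℕ}
    (hi : i < m + n) (hj : j < m + n) (hiw : i ≤ w.length) (hjw : j ≤ w.length)
    (h : pathHeight m n (w.take i) = pathHeight m n (w.take j)) : i = j := by
  have height_eq (i : ℕ) (hi : i ≤ w.length) :
      pathHeight m n (w.take i) = (m + n : ℤ) * (w.take i).count true - n * i := by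
    have hi' : (i : ℤ) = (w.take i).count false + (w.take i).count true := by
      have := List.count_false_add_count_true (w.take i)
      rw [List.length_take_of_le hi] at this
      exact_mod_cast this.symm
    rw [pathHeight, hi']; ring
  rw [height_eq i hiw, height_eq j hjw] at h
  have hdvd : ((m + n : ℕ) : ℤ) ∣ n * ((i : ℤ) - j) :=
    ⟨(w.take i).count true - (w.take j).count true, by push_cast; linarith⟩
  have hcop : IsCoprime ((m + n : ℕ) : ℤ) n := by
    rw [Nat.isCoprime_iff_coprime, Nat.coprime_add_self_left]; exact hmn
  have := Int.eq_zero_of_abs_lt_dvd (hcop.dvd_of_dvd_mul_left hdvd)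
    (by rw [abs_sub_lt_iff]; omega)
  omega

end PathHeight

lemma add_pos_of_coprime {m n : ℕ} (hmn : m.Coprime n) : 0 < m + n := by
  by_contra! h0
  obtain ⟨rfl, rfl⟩ : m = 0 ∧ n = 0 := by omega
  simp at hmn

lemma exists_isDyck_rotate {m n : ℕ} (hmn : m.Coprime n) {w : List Bool}
    (hf : w.count false = m) (ht : w.count true = n) :
    ∃ k < m + n, IsDyck m n (w.rotate k) := by
  have hpos := add_pos_of_coprime hmn
  obtain ⟨k, hk, hmin⟩ := exists_min_image (range (m + n))
    (fun i => pathHeight m n (w.take i)) ⟨0, mem_range.2 hpos⟩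
  refine ⟨k, mem_range.1 hk, (isDyck_rotate_iff m n hf ht (mem_range.1 hk).le).2 fun i hi => ?_⟩
  rcases hi.lt_or_eq with hi | rfl
  · exact hmin i (mem_range.2 hi)
  · rw [← length_eq_of_count m n hf ht, List.take_length, pathHeight_eq_zero m n hf ht]
    simpa using hmin 0 (mem_range.2 hpos)

lemma eq_of_isDyck_rotate {m n : ℕ} (hmn : m.Coprime n) {w : List Bool}
    (hf : w.count false = m) (ht : w.count true = n) {k k' : ℕ} (hk : k < m + n)
    (hk' : k' < m + n) (hd : IsDyck m n (w.rotate k)) (hd' : IsDyck m n (w.rotate k')) :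
    k = k' := by
  have hlen := length_eq_of_count m n hf ht
  rw [isDyck_rotate_iff m n hf ht hk.le] at hd
  rw [isDyck_rotate_iff m n hf ht hk'.le] at hd'
  exact eq_of_pathHeight_take_eq hmn hk hk' (by omega) (by omega)
    (le_antisymm (hd k' hk'.le) (hd' k hk.le))

lemma List.count_ofFn_true {N : ℕ} (f : Fin N → Bool) :
    (List.ofFn f).count true = #{i | f i = true} := by
  rw [← Multiset.coe_count, ← Fin.univ_val_map, Multiset.count_map, card_def, filter_val]
  simp only [eq_comm]

noncomputable def latticePaths (m n : ℕ) : Finset (List Bool) :=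
  (powersetCard n (univ : Finset (Fin (m + n)))).image fun s => List.ofFn fun i => decide (i ∈ s)

lemma mem_latticePaths {m n : ℕ} {w : List Bool} :
    w ∈ latticePaths m n ↔ w.count false = m ∧ w.count true = n := by
  constructor
  · intro hw
    obtain ⟨s, hs, rfl⟩ := mem_image.1 hw
    have ht : (List.ofFn fun i => decide (i ∈ s)).count true = n := by
      simpa [List.count_ofFn_true] using (mem_powersetCard.1 hs).2
    refine ⟨?_, ht⟩
    have := List.count_false_add_count_true (List.ofFn fun i => decide (i ∈ s))
    rw [List.length_ofFn, ht] at this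
    omega
  · rintro ⟨hf, ht⟩
    have hlen := length_eq_of_count m n hf ht
    have hw : (List.ofFn fun i : Fin (m + n) => w[i.cast hlen.symm]) = w := by
      apply List.ext_getElem <;> simp [hlen]
    refine mem_image.2 ⟨({i | w[i.cast hlen.symm] = true} : Finset (Fin (m + n))),
      mem_powersetCard.2 ⟨subset_univ _, ?_⟩, ?_⟩
    · rw [← List.count_ofFn_true, hw, ht]
    · apply List.ext_getElem <;> simp [hlen]

lemma card_latticePaths (m n : ℕ) : #(latticePaths m n) = (m + n).choose n := by
  rw [latticePaths, card_image_of_injective, card_powersetCard, card_univ, Fintype.card_fin]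
  intro s t hst
  ext i
  simpa using congr_fun (List.ofFn_injective hst) i

lemma card_filter_range_isDyck_rotate {m n : ℕ} (hmn : m.Coprime n) {w : List Bool}
    (hw : w ∈ latticePaths m n) : #{k ∈ range (m + n) | IsDyck m n (w.rotate k)} = 1 := by
  obtain ⟨hf, ht⟩ := mem_latticePaths.1 hw
  obtain ⟨k, hk, hd⟩ := exists_isDyck_rotate hmn hf ht
  refine card_eq_one.2 ⟨k, eq_singleton_iff_unique_mem.2 ⟨mem_filter.2 ⟨mem_range.2 hk, hd⟩, ?_⟩⟩
  intro k' hk'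
  obtain ⟨hk'_lt, hd'⟩ := mem_filter.1 hk'
  exact eq_of_isDyck_rotate hmn hf ht (mem_range.1 hk'_lt) hk hd' hd

lemma card_filter_isDyck_rotate (m n : ℕ) {k : ℕ} (hk : k ≤ m + n) :
    #{w ∈ latticePaths m n | IsDyck m n (w.rotate k)} =
      #{w ∈ latticePaths m n | IsDyck m n w} := by
  have rotate_mem {w : List Bool} (hw : w ∈ latticePaths m n) (j : ℕ) :
      w.rotate j ∈ latticePaths m n := by
    simpa only [mem_latticePaths, (List.rotate_perm w j).count_eq] using hw
  have rotate_rotate {w : List Bool} (hw : w ∈ latticePaths m n) (i j : ℕ)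
      (hij : i + j = m + n) :
      (w.rotate i).rotate j = w := by
    obtain ⟨hf, ht⟩ := mem_latticePaths.1 hw
    rw [List.rotate_rotate, hij, ← length_eq_of_count m n hf ht, List.rotate_length]
  refine card_nbij' (·.rotate k) (·.rotate (m + n - k)) ?_ ?_ ?_ ?_
  · intro w hw
    simp only [mem_coe, mem_filter] at hw ⊢
    exact ⟨rotate_mem hw.1 k, hw.2⟩
  · intro w hw
    simp only [mem_coe, mem_filter] at hw ⊢
    exact ⟨rotate_mem hw.1 _, by rw [rotate_rotate hw.1 _ _ (by omega)]; exact hw.2⟩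
  · intro w hw
    exact rotate_rotate (mem_filter.1 hw).1 _ _ (by omega)
  · intro w hw
    exact rotate_rotate (mem_filter.1 hw).1 _ _ (by omega)

theorem add_mul_card_filter_isDyck {m n : ℕ} (hmn : m.Coprime n) :
    (m + n) * #{w ∈ latticePaths m n | IsDyck m n w} = (m + n).choose n := by
  have := card_mul_eq_card_mul (fun w k => IsDyck m n (w.rotate k)) (s := latticePaths m n)
    (t := range (m + n))
    (fun w hw => card_filter_range_isDyck_rotate hmn hw)
    (fun k hk => card_filter_isDyck_rotate m n (mem_range.1 hk).le)
  rwa [card_latticePaths, mul_one, card_range, eq_comm] at this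

theorem statement0_general (m n : ℕ) (h : Nat.Coprime m n) :
    (Nat.card {w : List Bool // IsDyck m n w} : ℚ) =
      (1 / (m + n : ℚ)) * ((m + n).choose n : ℚ) := by
  have hcard :
      Nat.card {w : List Bool // IsDyck m n w} = #{w ∈ latticePaths m n | IsDyck m n w} := by
    rw [← Nat.card_eq_finsetCard]
    refine Nat.card_congr (Equiv.subtypeEquivRight fun w => ?_)
    rw [mem_filter, mem_latticePaths]
    exact ⟨fun hd => ⟨⟨hd.1, hd.2.1⟩, hd⟩, And.right⟩
  have hpos : (m + n : ℚ) ≠ 0 := by exact_mod_cast (add_pos_of_coprime h).ne'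
  rw [hcard, ← add_mul_card_filter_isDyck h]
  push_cast
  field_simp

/-- the number of `(m,n)`-Dyck paths is the rational Catalan number
`(1/(m+n)) * choose (m+n) n`. -/
theorem statement0 (m n : ℕ) (hm : 0 < m) (hn : 0 < n) (h : Nat.Coprime m n) :
    (Nat.card {w : List Bool // IsDyck m n w} : ℚ) =
      (1 / (m + n : ℚ)) * ((m + n).choose n : ℚ) :=
  statement0_general m n h
end

section
/- Let m, n be coprime positive integers and γ an (m,n)-Dyck path. Let r_h be a horizontal step ending at (a,b) and r_v a vertical step starting at (a',b') with r_v after r_h in γ. Then there exists a line of slope n/m intersecting both r_h and r_v if and only if -n < n(a'-a) - m(b'-b) < m. Moreover, the two conditions '-n < n(a'-a)-m(b'-b) < m-n' and 'm-n < n(a'-a)-m(b'-b) < m' are mutually exclusive and their disjunction is equivalent to the existence of such a common transversal line. -/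
open scoped Classical
open Finset

/-!
Let `[a, a+1] × {b}` and `{a'} × [b', b'+1]` be the two steps and
`D = n (a' - a - 1) - m (b' - b)`. A line `n x - m y = c` meets both iff `n s + m t = D + n`
for some `s, t ∈ [0, 1]`, so such a line exists iff `-n ≤ D ≤ m`. Each of the values
`D = -n`, `D = m`, `D = m - n` would give `n k = m l` with `0 < k ≤ m` or `0 < l ≤ n`, hence
`(k, l) = (m, n)` by coprimality; this is incompatible with both steps lying in the `m × n`
rectangle, and for `D = m - n` it would put the lattice point `(a', b') = (m, b')`, `b' < n`,
strictly below the diagonal.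
-/

theorem exists_mul_add_mul_eq_iff {p q d : ℝ} (hp : 0 ≤ p) (hq : 0 ≤ q) :
    (∃ s ∈ Set.Icc (0 : ℝ) 1, ∃ t ∈ Set.Icc (0 : ℝ) 1, p * s + q * t = d) ↔
      0 ≤ d ∧ d ≤ p + q := by
  constructor
  · rintro ⟨s, ⟨hs₀, hs₁⟩, t, ⟨ht₀, ht₁⟩, rfl⟩
    constructor <;> nlinarith
  · rintro ⟨hd₀, hd₁⟩
    rcases hp.eq_or_lt with rfl | hp
    · rcases hq.eq_or_lt with rfl | hq
      · exact ⟨0, by simp, 0, by simp, by linarith⟩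
      · refine ⟨0, by simp, d / q, ⟨by positivity, (div_le_one hq).2 (by linarith)⟩, ?_⟩
        field_simp
        ring
    · by_cases hdp : d ≤ p
      · exact ⟨d / p, ⟨by positivity, (div_le_one hp).2 hdp⟩, 0, by simp, by field_simp; ring⟩
      · have hq : 0 < q := by linarith
        refine ⟨1, by simp, (d - p) / q,
          ⟨div_nonneg (by linarith) hq.le, (div_le_one hq).2 (by linarith)⟩, ?_⟩
        field_simp
        ring

def diagOffset (m n : ℕ) (w : List Bool) (i j : ℕ) : ℤ :=
  n * (ptX w j - (ptX w i + 1)) - m * (ptY w j - ptY w i)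

theorem meetsBoth_iff (m n : ℕ) (w : List Bool) (i j : ℕ) :
    MeetsBoth m n w i j ↔ -(n : ℤ) ≤ diagOffset m n w i j ∧ diagOffset m n w i j ≤ m := by
  have hsum : MeetsBoth m n w i j ↔ ∃ s ∈ Set.Icc (0 : ℝ) 1, ∃ t ∈ Set.Icc (0 : ℝ) 1,
      (n : ℝ) * s + m * t = ((diagOffset m n w i j + n : ℤ) : ℝ) := by
    simp only [diagOffset]
    push_cast
    constructor
    · rintro ⟨c, ⟨x, hx₀, hx₁, rfl⟩, y, hy₀, hy₁, hc⟩
      exact ⟨x - ptX w i, ⟨by linarith, by linarith⟩, y - ptY w j, ⟨by linarith, by linarith⟩,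
        by linarith⟩
    · rintro ⟨s, ⟨hs₀, hs₁⟩, t, ⟨ht₀, ht₁⟩, h⟩
      exact ⟨_, ⟨ptX w i + s, by linarith, by linarith, rfl⟩,
        ptY w j + t, by linarith, by linarith, by linarith⟩
  rw [hsum, exists_mul_add_mul_eq_iff (Nat.cast_nonneg n) (Nat.cast_nonneg m)]
  norm_cast
  omega

theorem Int.eq_of_mul_eq_mul_of_isCoprime {m n k l : ℤ} (hmn : IsCoprime m n)
    (h : n * k = m * l) (hk : 0 < k) (hkm : k ≤ m) : k = m ∧ l = n := by
  obtain ⟨c, rfl⟩ : m ∣ k := hmn.dvd_of_dvd_mul_left (Dvd.intro l h.symm)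
  have hm : 0 < m := hk.trans_le hkm
  obtain rfl : c = 1 := by
    have : 0 < c := pos_of_mul_pos_right hk hm.le
    nlinarith
  exact ⟨mul_one m, mul_left_cancel₀ hm.ne' (by linarith)⟩

theorem ptX_mono (w : List Bool) : Monotone (ptX w) := fun _ _ h => by
  simpa only [ptX, Nat.cast_le] using (List.take_prefix_take_left h).count_le false

theorem ptY_mono (w : List Bool) : Monotone (ptY w) := fun _ _ h => by
  simpa only [ptY, Nat.cast_le] using (List.take_prefix_take_left h).count_le true

theorem ptX_succ {w : List Bool} {k : ℕ} (h : w[k]? = some false) :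
    ptX w (k + 1) = ptX w k + 1 := by
  simp [ptX, List.take_add_one, h]

theorem ptY_succ {w : List Bool} {k : ℕ} (h : w[k]? = some true) :
    ptY w (k + 1) = ptY w k + 1 := by
  simp [ptY, List.take_add_one, h]

theorem ptX_le_count (w : List Bool) (k : ℕ) : ptX w k ≤ w.count false := by
  unfold ptX
  exact_mod_cast (List.take_sublist k w).count_le false

theorem ptY_le_count (w : List Bool) (k : ℕ) : ptY w k ≤ w.count true := by
  unfold ptY
  exact_mod_cast (List.take_sublist k w).count_le true

theorem IsDyck.mul_ptX_le {m n : ℕ} {w : List Bool} (hw : IsDyck m n w) (k : ℕ) :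
    n * ptX w k ≤ m * ptY w k := by
  unfold ptX ptY
  exact_mod_cast hw.2.2 _ ((List.mem_inits _ _).2 (List.take_prefix k w))

theorem IsDyck.diagOffset_ne {m n : ℕ} {w : List Bool} {i j : ℕ} (hw : IsDyck m n w)
    (hmn : Nat.Coprime m n) (hij : (i, j) ∈ Opairs w) :
    diagOffset m n w i j ≠ -n ∧ diagOffset m n w i j ≠ m ∧ diagOffset m n w i j ≠ m - n := by
  obtain ⟨-, hij, hi, hj⟩ := Finset.mem_filter.1 hij
  have hmn : IsCoprime (m : ℤ) n := hmn.isCoprime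
  have hX : ptX w i + 1 ≤ ptX w j := ptX_succ hi ▸ ptX_mono w hij
  have hY : ptY w i ≤ ptY w j := ptY_mono w hij.le
  have hXm : ptX w j ≤ m := hw.1 ▸ ptX_le_count w j
  have hYn : ptY w j + 1 ≤ n := hw.2.1 ▸ ptY_succ hj ▸ ptY_le_count w (j + 1)
  have hX₀ : 0 ≤ ptX w i := Nat.cast_nonneg _
  have hY₀ : 0 ≤ ptY w i := Nat.cast_nonneg _
  unfold diagOffset
  refine ⟨fun h => ?_, fun h => ?_, fun h => ?_⟩
  · obtain ⟨-, hl⟩ := Int.eq_of_mul_eq_mul_of_isCoprime hmn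
      (k := ptX w j - ptX w i) (l := ptY w j - ptY w i) (by linarith) (by omega) (by omega)
    omega
  · obtain ⟨-, hk⟩ := Int.eq_of_mul_eq_mul_of_isCoprime hmn.symm
      (k := ptY w j - ptY w i + 1) (l := ptX w j - ptX w i - 1) (by linarith) (by omega) (by omega)
    omega
  · obtain ⟨hk, -⟩ := Int.eq_of_mul_eq_mul_of_isCoprime hmn
      (k := ptX w j - ptX w i) (l := ptY w j - ptY w i + 1) (by linarith) (by omega) (by omega)
    have hdiag := hw.mul_ptX_le j
    have hXj : ptX w j = m := by omega
    rw [hXj] at hdiag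
    nlinarith

theorem statement6_general (m n : ℕ) (h : Nat.Coprime m n)
    (w : List Bool) (hw : IsDyck m n w) (i j : ℕ) (hij : (i, j) ∈ Opairs w) :
    (MeetsBoth m n w i j ↔
      (-(n : ℤ) < n * (ptX w j - (ptX w i + 1)) - m * (ptY w j - ptY w i) ∧
        n * (ptX w j - (ptX w i + 1)) - m * (ptY w j - ptY w i) < (m : ℤ))) ∧
    ¬ ((-(n : ℤ) < n * (ptX w j - (ptX w i + 1)) - m * (ptY w j - ptY w i) ∧
          n * (ptX w j - (ptX w i + 1)) - m * (ptY w j - ptY w i) < (m : ℤ) - n) ∧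
        ((m : ℤ) - n < n * (ptX w j - (ptX w i + 1)) - m * (ptY w j - ptY w i) ∧
          n * (ptX w j - (ptX w i + 1)) - m * (ptY w j - ptY w i) < (m : ℤ))) ∧
    (((-(n : ℤ) < n * (ptX w j - (ptX w i + 1)) - m * (ptY w j - ptY w i) ∧
          n * (ptX w j - (ptX w i + 1)) - m * (ptY w j - ptY w i) < (m : ℤ) - n) ∨
        ((m : ℤ) - n < n * (ptX w j - (ptX w i + 1)) - m * (ptY w j - ptY w i) ∧
          n * (ptX w j - (ptX w i + 1)) - m * (ptY w j - ptY w i) < (m : ℤ))) ↔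
      MeetsBoth m n w i j) := by
  rw [show (n : ℤ) * (ptX w j - (ptX w i + 1)) - m * (ptY w j - ptY w i) =
    diagOffset m n w i j from rfl, meetsBoth_iff]
  obtain ⟨hneg, hm, hmn⟩ := hw.diagOffset_ne h hij
  omega

/-- a common transversal line of slope `n/m` meeting both `r_h` and `r_v`
exists iff `-n < n(a'-a) - m(b'-b) < m`; moreover conditions (1B) and (2B) are mutually
exclusive and their disjunction is equivalent to the existence of such a line. -/
theorem statement6 (m n : ℕ) (hm : 0 < m) (hn : 0 < n) (h : Nat.Coprime m n)
    (w : List Bool) (hw : IsDyck m n w) (i j : ℕ) (hij : (i, j) ∈ Opairs w) :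
    (MeetsBoth m n w i j ↔
      (-(n : ℤ) < n * (ptX w j - (ptX w i + 1)) - m * (ptY w j - ptY w i) ∧
        n * (ptX w j - (ptX w i + 1)) - m * (ptY w j - ptY w i) < (m : ℤ))) ∧
    ¬ ((-(n : ℤ) < n * (ptX w j - (ptX w i + 1)) - m * (ptY w j - ptY w i) ∧
          n * (ptX w j - (ptX w i + 1)) - m * (ptY w j - ptY w i) < (m : ℤ) - n) ∧
        ((m : ℤ) - n < n * (ptX w j - (ptX w i + 1)) - m * (ptY w j - ptY w i) ∧
          n * (ptX w j - (ptX w i + 1)) - m * (ptY w j - ptY w i) < (m : ℤ))) ∧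
    (((-(n : ℤ) < n * (ptX w j - (ptX w i + 1)) - m * (ptY w j - ptY w i) ∧
          n * (ptX w j - (ptX w i + 1)) - m * (ptY w j - ptY w i) < (m : ℤ) - n) ∨
        ((m : ℤ) - n < n * (ptX w j - (ptX w i + 1)) - m * (ptY w j - ptY w i) ∧
          n * (ptX w j - (ptX w i + 1)) - m * (ptY w j - ptY w i) < (m : ℤ))) ↔
      MeetsBoth m n w i j) :=
  statement6_general m n h w hw i j hij
end

section
/- Let m, n be coprime positive integers. The insertion map γ ↦ γ* (inserting a horizontal step after each vertical step) is a bijection from the set of (m,n)-Dyck paths onto the set of rugged (m+n,n)-Dyck paths, where an (m+n,n)-Dyck path is rugged if it has exactly n-1 outer vertices other than the outer vertex farthest from the diagonal. -/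
open scoped Classical
open Finset

/-! The insertion map adds one horizontal step per vertical step, so it maps a lattice point
`(x, y)` to `(x + y, y)`; this shear carries the line `n x = m y` to `n x = (m + n) y`, and the
only new lattice points of `γ*` are the tops of its vertical steps, which lie above old points. -/

@[simp] lemma star_nil : star [] = [] := rfl

@[simp] lemma star_cons_false (w : List Bool) : star (false :: w) = false :: star w := rfl

@[simp] lemma star_cons_true (w : List Bool) : star (true :: w) = true :: false :: star w := rfl

lemma star_append (u v : List Bool) : star (u ++ v) = star u ++ star v := by
  induction u with
  | nil => rfl
  | cons b u ih => cases b <;> simp [ih]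

@[simp] lemma count_false_star (w : List Bool) :
    (star w).count false = w.count false + w.count true := by
  induction w with
  | nil => rfl
  | cons b w ih =>
    have := w.count_false_add_count_true
    cases b <;> simp only [star_cons_false, star_cons_true, List.count_cons, ih] <;> norm_num <;> omega

@[simp] lemma count_true_star (w : List Bool) : (star w).count true = w.count true := by
  induction w with
  | nil => rfl
  | cons b w ih => cases b <;> simp [ih]

lemma injective_star : Function.Injective star := by
  intro u
  induction u with
  | nil => rintro (_ | ⟨_ | _, _⟩) h <;> simp_all
  | cons a u ih =>
    rintro (_ | ⟨b, v⟩) h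
    · cases a <;> simp at h
    · cases a <;> cases b <;> simp at h <;> simp [ih h]

lemma exists_prefix_of_prefix_star {q w : List Bool} (h : q <+: star w) :
    ∃ p, p <+: w ∧ (q = star p ∨ q = star p ++ [true]) := by
  induction w generalizing q with
  | nil => exact ⟨[], List.nil_prefix, .inl (List.prefix_nil.1 h)⟩
  | cons b w ih =>
    rcases q with _ | ⟨c, q⟩
    · exact ⟨[], List.nil_prefix, .inl rfl⟩
    cases b
    · obtain ⟨rfl, hq⟩ := List.cons_prefix_cons.1 h
      obtain ⟨p, hp, hpq⟩ := ih hq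
      refine ⟨false :: p, List.cons_prefix_cons.2 ⟨rfl, hp⟩, ?_⟩
      rcases hpq with rfl | rfl <;> simp
    · rcases q with _ | ⟨d, q⟩
      · obtain ⟨rfl, -⟩ := List.cons_prefix_cons.1 h
        exact ⟨[], List.nil_prefix, .inr rfl⟩
      obtain ⟨rfl, rfl, hq⟩ : c = true ∧ d = false ∧ q <+: star w := by simpa using h
      obtain ⟨p, hp, hpq⟩ := ih hq
      refine ⟨true :: p, List.cons_prefix_cons.2 ⟨rfl, hp⟩, ?_⟩
      rcases hpq with rfl | rfl <;> simp

lemma rugged_star (w : List Bool) : Rugged (star w) := by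
  induction w with
  | nil => simp [Rugged]
  | cons b w ih =>
    cases b
    · rintro (_ | i) h
      · simp at h
      · simpa using ih i (by simpa using h)
    · rintro (_ | _ | i) h
      · simp
      · simp at h
      · simpa using ih i (by simpa using h)

lemma Rugged.of_cons {b : Bool} {w : List Bool} (h : Rugged (b :: w)) : Rugged w :=
  fun i hi => by simpa using h (i + 1) (by simpa using hi)

lemma exists_star_eq_of_rugged : ∀ w : List Bool, Rugged w → ∃ u, star u = w
  | [], _ => ⟨[], rfl⟩
  | false :: w, h =>
    let ⟨u, hu⟩ := exists_star_eq_of_rugged w h.of_cons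
    ⟨false :: u, by simp [hu]⟩
  | true :: false :: w, h =>
    let ⟨u, hu⟩ := exists_star_eq_of_rugged w h.of_cons.of_cons
    ⟨true :: u, by simp [hu]⟩
  | [true], h => absurd (h 0 rfl) (by simp)
  | true :: true :: _, h => absurd (h 0 rfl) (by simp)

lemma sheared_le_iff (m n x y : ℕ) : n * (x + y) ≤ (m + n) * y ↔ n * x ≤ m * y := by
  rw [mul_add, add_mul]
  exact Nat.add_le_add_iff_right

lemma isDyck_star_iff {m n : ℕ} {w : List Bool} :
    IsDyck (m + n) n (star w) ↔ IsDyck m n w := by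
  simp only [IsDyck, count_false_star, count_true_star, List.mem_inits]
  constructor
  · rintro ⟨hf, ht, hprefix⟩
    refine ⟨by omega, ht, ?_⟩
    rintro p ⟨t, rfl⟩
    have := hprefix (star p) ⟨star t, (star_append p t).symm⟩
    rwa [count_false_star, count_true_star, sheared_le_iff] at this
  · rintro ⟨hf, ht, hprefix⟩
    refine ⟨by omega, ht, fun q hq => ?_⟩
    obtain ⟨p, hp, rfl | rfl⟩ := exists_prefix_of_prefix_star hq
    all_goals
      have := (sheared_le_iff m n _ _).2 (hprefix p hp)
      simp only [List.count_append, count_false_star, count_true_star]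
    · simpa using this
    · simp only [List.count_singleton, beq_iff_eq, reduceCtorEq, if_false, if_true, add_zero]
      exact this.trans (Nat.mul_le_mul_left _ (Nat.le_succ _))

theorem statement8_general (m n : ℕ) :
    Set.BijOn star {w : List Bool | IsDyck m n w}
      {w : List Bool | IsDyck (m + n) n w ∧ Rugged w} := by
  refine ⟨fun w hw => ⟨isDyck_star_iff.2 hw, rugged_star w⟩, injective_star.injOn, ?_⟩
  rintro w ⟨hd, hr⟩
  obtain ⟨u, rfl⟩ := exists_star_eq_of_rugged w hr
  exact ⟨u, isDyck_star_iff.1 hd, rfl⟩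

/-- the insertion map is a bijection from `(m,n)`-Dyck paths onto rugged
`(m+n,n)`-Dyck paths. -/
theorem statement8 (m n : ℕ) (hm : 0 < m) (hn : 0 < n) (h : Nat.Coprime m n) :
    Set.BijOn star {w : List Bool | IsDyck m n w}
      {w : List Bool | IsDyck (m + n) n w ∧ Rugged w} :=
  statement8_general m n
end

section
/- Let m, n be coprime positive integers. For any (m,n)-Dyck path γ, 0 ≤ h(γ) ≤ |O(γ)| ≤ (m-1)(n-1)/2, and hence 0 ≤ area(γ) ≤ (m-1)(n-1)/2; moreover area(γ) + |O(γ)| = (m-1)(n-1)/2. -/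
open scoped Classical
open Finset

/-! Column `x` of the grid is crossed by the `x`-th horizontal step of the path, at height
`columnHeight w x`. The squares of that column below the path are those counted by `area`; a square
`(x, y)` above it corresponds to the pair (`x`-th horizontal step, `y`-th vertical step) of `O(γ)`,
and the Dyck condition puts it above the diagonal. Hence `area + |O|` counts the squares above the
diagonal, i.e. (through their lower-right corners) the interior lattice points strictly above it.
By coprimality no interior lattice point lies on the diagonal, so the central symmetry
`(u, v) ↦ (m - u, n - v)` shows that exactly half of the `(m - 1)(n - 1)` of them lie above. -/

section StepIndex

variable (w : List Bool) (b : Bool)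

lemma count_take_eq_nat_count (i : ℕ) :
    (w.take i).count b = Nat.count (fun j => w[j]? = some b) i := by
  induction i with
  | zero => simp
  | succ i ih =>
    rw [Nat.count_succ, ← ih, List.take_add_one, List.count_append]
    cases h : w[i]? with
    | none => simp
    | some c => cases c <;> cases b <;> simp

noncomputable def stepIdx (k : ℕ) : ℕ := Nat.nth (fun j => w[j]? = some b) k

variable {w b}

lemma count_take_mono {i j : ℕ} (hij : i ≤ j) : (w.take i).count b ≤ (w.take j).count b := by
  simpa only [count_take_eq_nat_count] using Nat.count_monotone _ hij

lemma count_take_succ_of_getElem? {i : ℕ} (h : w[i]? = some b) :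
    (w.take (i + 1)).count b = (w.take i).count b + 1 := by
  simpa only [count_take_eq_nat_count] using Nat.count_succ_eq_succ_count_iff.2 h

lemma count_take_succ_of_getElem?_of_ne {i : ℕ} {c : Bool} (h : w[i]? = some c) (hc : c ≠ b) :
    (w.take (i + 1)).count b = (w.take i).count b := by
  simpa only [count_take_eq_nat_count] using
    Nat.count_succ_eq_count_iff.2 (by rw [h]; simpa using hc)

lemma count_take_lt_count {i : ℕ} (h : w[i]? = some b) : (w.take i).count b < w.count b := by
  calc (w.take i).count b < (w.take (i + 1)).count b := by
        rw [count_take_succ_of_getElem? h]; exact Nat.lt_succ_self _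
    _ ≤ w.count b := (w.take_sublist _).count_le b

lemma stepIdx_lt_length {k : ℕ} (hk : k < w.count b) : stepIdx w b k < w.length := by
  rw [← List.take_length (l := w), count_take_eq_nat_count] at hk
  exact Nat.nth_lt_of_lt_count hk

lemma count_take_stepIdx {k : ℕ} (hk : k < w.count b) : (w.take (stepIdx w b k)).count b = k := by
  rw [← List.take_length (l := w), count_take_eq_nat_count] at hk
  rw [count_take_eq_nat_count]
  exact Nat.count_nth fun hf => hk.trans_le (Nat.count_le_card hf _)

lemma getElem?_stepIdx {k : ℕ} (hk : k < w.count b) : w[stepIdx w b k]? = some b := by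
  rw [← List.take_length (l := w), count_take_eq_nat_count] at hk
  exact Nat.nth_mem _ fun hf => hk.trans_le (Nat.count_le_card hf _)

lemma stepIdx_count_take {i : ℕ} (h : w[i]? = some b) : stepIdx w b ((w.take i).count b) = i := by
  rw [count_take_eq_nat_count]
  exact Nat.nth_count h

end StepIndex

/-- Unit squares of `[0,m] × [0,n]`, by their lower-left corner, lying weakly above the diagonal. -/
def cellsAboveDiagonal (m n : ℕ) : Finset (ℕ × ℕ) :=
  (range m ×ˢ range n).filter (fun xy => n * (xy.1 + 1) ≤ m * xy.2)

noncomputable def columnHeight (w : List Bool) (x : ℕ) : ℕ :=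
  (w.take (stepIdx w false x)).count true

section Area

variable {m n : ℕ} {w : List Bool}

lemma areaSet_eq_filter (hm : w.count false = m) :
    areaSet m n w = (cellsAboveDiagonal m n).filter (fun xy => xy.2 < columnHeight w xy.1) := by
  rw [cellsAboveDiagonal, filter_filter]
  ext ⟨x, y⟩
  simp only [areaSet, mem_filter, mem_product, mem_range, and_congr_right_iff]
  rintro ⟨hx, -⟩ -
  rw [← hm] at hx
  constructor
  · rintro ⟨i, -, hi, hix, hiy⟩
    rw [count_take_succ_of_getElem? hi, Nat.add_right_cancel_iff] at hix
    rw [count_take_succ_of_getElem?_of_ne hi Bool.false_ne_true] at hiy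
    rw [columnHeight, ← hix, stepIdx_count_take hi]
    omega
  · intro hy
    refine ⟨stepIdx w false x, stepIdx_lt_length hx, getElem?_stepIdx hx, ?_, ?_⟩
    · rw [count_take_succ_of_getElem? (getElem?_stepIdx hx), count_take_stepIdx hx]
    · rw [count_take_succ_of_getElem?_of_ne (getElem?_stepIdx hx) Bool.false_ne_true]
      exact hy

lemma card_Opairs (hm : w.count false = m) (hn : w.count true = n) :
    #(Opairs w) = #((range m ×ˢ range n).filter (fun xy => columnHeight w xy.1 ≤ xy.2)) := by
  subst hm hn
  refine card_nbij' (fun ij => ((w.take ij.1).count false, (w.take ij.2).count true))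
    (fun xy => (stepIdx w false xy.1, stepIdx w true xy.2)) ?_ ?_ ?_ ?_
  · rintro ⟨i, j⟩ hij
    simp only [Opairs, coe_filter, mem_product, mem_range, Set.mem_ofPred_eq] at hij ⊢
    obtain ⟨-, hij, hi, hj⟩ := hij
    refine ⟨⟨count_take_lt_count hi, count_take_lt_count hj⟩, ?_⟩
    rw [columnHeight, stepIdx_count_take hi]
    exact count_take_mono hij.le
  · rintro ⟨x, y⟩ hxy
    simp only [Opairs, coe_filter, mem_product, mem_range, Set.mem_ofPred_eq] at hxy ⊢
    obtain ⟨⟨hx, hy⟩, hxy⟩ := hxy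
    refine ⟨⟨stepIdx_lt_length hx, stepIdx_lt_length hy⟩, ?_, getElem?_stepIdx hx,
      getElem?_stepIdx hy⟩
    have hne : stepIdx w false x ≠ stepIdx w true y := fun heq => by
      simpa [heq, getElem?_stepIdx hy] using getElem?_stepIdx hx
    refine hne.lt_of_le (le_of_not_gt fun hlt => ?_)
    have := count_take_mono (w := w) (b := true) (Nat.succ_le_of_lt hlt)
    rw [count_take_succ_of_getElem? (getElem?_stepIdx hy), count_take_stepIdx hy] at this
    rw [columnHeight] at hxy
    omega
  · rintro ⟨i, j⟩ hij
    simp only [Opairs, coe_filter, mem_product, mem_range, Set.mem_ofPred_eq] at hij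
    simp only [stepIdx_count_take hij.2.2.1, stepIdx_count_take hij.2.2.2]
  · rintro ⟨x, y⟩ hxy
    simp only [coe_filter, mem_product, mem_range, Set.mem_ofPred_eq] at hxy
    simp only [count_take_stepIdx hxy.1.1, count_take_stepIdx hxy.1.2]

lemma mul_succ_le_mul_columnHeight (hw : IsDyck m n w) {x : ℕ} (hx : x < m) :
    n * (x + 1) ≤ m * columnHeight w x := by
  obtain ⟨hm, -, hdyck⟩ := hw
  rw [← hm] at hx
  have hi := getElem?_stepIdx hx
  have := hdyck _ (List.mem_inits _ _ |>.2 (w.take_prefix (stepIdx w false x + 1)))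
  rwa [count_take_succ_of_getElem? hi, count_take_stepIdx hx,
    count_take_succ_of_getElem?_of_ne hi Bool.false_ne_true] at this

theorem area_add_card_Opairs (hw : IsDyck m n w) :
    area m n w + #(Opairs w) = #(cellsAboveDiagonal m n) := by
  have hcols : (range m ×ˢ range n).filter (fun xy => columnHeight w xy.1 ≤ xy.2) =
      (cellsAboveDiagonal m n).filter (fun xy => ¬ xy.2 < columnHeight w xy.1) := by
    rw [cellsAboveDiagonal, filter_filter]
    refine filter_congr fun ⟨x, y⟩ hxy => ?_
    simp only [mem_product, mem_range] at hxy
    simp only [not_lt, iff_and_self]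
    exact fun hy => (mul_succ_le_mul_columnHeight hw hxy.1).trans (Nat.mul_le_mul_left m hy)
  rw [area, areaSet_eq_filter hw.1, card_Opairs hw.1 hw.2.1, hcols,
    card_filter_add_card_filter_not]

end Area

lemma Nat.Coprime.mul_ne_mul {m n u v : ℕ} (h : m.Coprime n) (hu : 0 < u) (hum : u < m) :
    n * u ≠ m * v := fun huv =>
  hum.not_ge <| Nat.le_of_dvd hu <| h.dvd_of_dvd_mul_left ⟨v, huv⟩

section Grid

variable {m n : ℕ}

lemma card_cellsAboveDiagonal (h : m.Coprime n) :
    #(cellsAboveDiagonal m n) = #((Ico 1 m ×ˢ Ico 1 n).filter (fun uv => n * uv.1 < m * uv.2)) := by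
  refine card_nbij' (fun xy => (xy.1 + 1, xy.2)) (fun uv => (uv.1 - 1, uv.2)) ?_ ?_ ?_ ?_
  · rintro ⟨x, y⟩ hxy
    simp only [cellsAboveDiagonal, coe_filter, mem_product, mem_range, mem_Ico,
      Set.mem_ofPred_eq] at hxy ⊢
    obtain ⟨⟨hx, hy⟩, hle⟩ := hxy
    have hxm : x + 1 < m := by
      by_contra!
      nlinarith
    have hy0 : 0 < y := Nat.pos_of_mul_pos_left ((Nat.mul_pos (by omega) x.succ_pos).trans_le hle)
    exact ⟨⟨⟨by omega, hxm⟩, hy0, hy⟩, hle.lt_of_ne (h.mul_ne_mul x.succ_pos hxm)⟩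
  · rintro ⟨u, v⟩ huv
    simp only [cellsAboveDiagonal, coe_filter, mem_product, mem_range, mem_Ico,
      Set.mem_ofPred_eq] at huv ⊢
    obtain ⟨⟨⟨hu, hum⟩, -, hv⟩, hlt⟩ := huv
    refine ⟨⟨by omega, hv⟩, ?_⟩
    rw [Nat.sub_add_cancel hu]
    exact hlt.le
  · intro xy _
    simp
  · rintro ⟨u, v⟩ huv
    simp only [coe_filter, mem_product, mem_Ico, Set.mem_ofPred_eq] at huv
    simp [Nat.sub_add_cancel huv.1.1.1]

lemma card_filter_lt_eq_card_filter_gt :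
    #((Ico 1 m ×ˢ Ico 1 n).filter (fun uv => n * uv.1 < m * uv.2)) =
      #((Ico 1 m ×ˢ Ico 1 n).filter (fun uv => m * uv.2 < n * uv.1)) := by
  have hswap : ∀ u v, u < m → v < n → (n * u < m * v ↔ m * (n - v) < n * (m - u)) := by
    intro u v hu hv
    have := Nat.mul_le_mul_left m hv.le
    have := Nat.mul_le_mul_left n hu.le
    rw [Nat.mul_sub, Nat.mul_sub, Nat.mul_comm n m]
    omega
  refine card_nbij' (fun uv => (m - uv.1, n - uv.2)) (fun uv => (m - uv.1, n - uv.2))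
    ?_ ?_ ?_ ?_
  · rintro ⟨u, v⟩ huv
    simp only [coe_filter, mem_product, mem_Ico, Set.mem_ofPred_eq] at huv ⊢
    obtain ⟨⟨⟨hu, hum⟩, hv, hvn⟩, hlt⟩ := huv
    exact ⟨⟨⟨by omega, by omega⟩, by omega, by omega⟩, (hswap u v hum hvn).1 hlt⟩
  · rintro ⟨u, v⟩ huv
    simp only [coe_filter, mem_product, mem_Ico, Set.mem_ofPred_eq] at huv ⊢
    obtain ⟨⟨⟨hu, hum⟩, hv, hvn⟩, hlt⟩ := huv
    refine ⟨⟨⟨by omega, by omega⟩, by omega, by omega⟩, (hswap _ _ (by omega) (by omega)).2 ?_⟩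
    rwa [Nat.sub_sub_self hum.le, Nat.sub_sub_self hvn.le]
  all_goals
    rintro ⟨u, v⟩ huv
    simp only [coe_filter, mem_product, mem_Ico, Set.mem_ofPred_eq] at huv
    simp only [Prod.mk.injEq]
    omega

theorem two_mul_card_cellsAboveDiagonal (h : m.Coprime n) :
    2 * #(cellsAboveDiagonal m n) = (m - 1) * (n - 1) := by
  have hgt : (Ico 1 m ×ˢ Ico 1 n).filter (fun uv => m * uv.2 < n * uv.1) =
      (Ico 1 m ×ˢ Ico 1 n).filter (fun uv => ¬ n * uv.1 < m * uv.2) := by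
    refine filter_congr fun ⟨u, v⟩ huv => ?_
    simp only [mem_product, mem_Ico] at huv
    have := h.mul_ne_mul (v := v) huv.1.1 huv.1.2
    dsimp only
    omega
  have hsum := card_filter_add_card_filter_not (s := Ico 1 m ×ˢ Ico 1 n)
    (p := fun uv => n * uv.1 < m * uv.2)
  rw [← hgt, ← card_filter_lt_eq_card_filter_gt, ← card_cellsAboveDiagonal h, card_product,
    Nat.card_Ico, Nat.card_Ico] at hsum
  omega

end Grid

/-- `0 ≤ h(γ) ≤ |O(γ)| ≤ (m-1)(n-1)/2`, hence
`0 ≤ area(γ) ≤ (m-1)(n-1)/2`, and `area(γ) + |O(γ)| = (m-1)(n-1)/2`. -/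
theorem statement18 (m n : ℕ) (hm : 0 < m) (hn : 0 < n) (h : Nat.Coprime m n)
    (w : List Bool) (hw : IsDyck m n w) :
    (Hpairs m n w).card ≤ (Opairs w).card ∧
    ((Opairs w).card : ℚ) ≤ ((m : ℚ) - 1) * ((n : ℚ) - 1) / 2 ∧
    (area m n w : ℚ) ≤ ((m : ℚ) - 1) * ((n : ℚ) - 1) / 2 ∧
    (area m n w : ℚ) + ((Opairs w).card : ℚ) = ((m : ℚ) - 1) * ((n : ℚ) - 1) / 2 := by
  have hnat : 2 * (area m n w + #(Opairs w)) = (m - 1) * (n - 1) := by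
    rw [area_add_card_Opairs hw, two_mul_card_cellsAboveDiagonal h]
  have hsum : (area m n w : ℚ) + #(Opairs w) = ((m : ℚ) - 1) * ((n : ℚ) - 1) / 2 := by
    have := congrArg (Nat.cast : ℕ → ℚ) hnat
    push_cast [Nat.cast_sub hm, Nat.cast_sub hn] at this
    linarith
  have harea : (0 : ℚ) ≤ area m n w := Nat.cast_nonneg _
  have hO : (0 : ℚ) ≤ #(Opairs w) := Nat.cast_nonneg _
  exact ⟨card_filter_le _ _, by linarith, by linarith, hsum⟩
end

section
/- Let m, n be coprime positive integers with m > n, and let δ be an (m,n)-Dyck path with n vertical steps. Then δ is rugged (every vertical step is immediately followed by a horizontal step in the step word of δ, i.e. no two vertical steps are adjacent and δ does not end with a vertical step; equivalently, the number of VH-corners is n) if and only if δ lies in the image of the insertion map from (m-n, n)-Dyck paths, i.e., δ = γ* for a unique (m-n,n)-Dyck path γ, obtained from δ by deleting the horizontal step immediately following each vertical step. -/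
open scoped Classical
open Finset

/-- Deletion map: delete the step after each vertical step. -/
def unstar : List Bool → List Bool
  | [] => []
  | false :: w => false :: unstar w
  | [true] => [true]
  | true :: _ :: w => true :: unstar w

lemma star_append_s19 (a b : List Bool) : _root_.star (a ++ b) = _root_.star a ++ _root_.star b := by
  induction a with
  | nil => rfl
  | cons x t ih => cases x <;> simp [_root_.star, ih]

lemma star_count_true (w : List Bool) : (_root_.star w).count true = w.count true := by
  induction w with
  | nil => rfl
  | cons x t ih => cases x <;> simp [_root_.star, ih, List.count_cons]

lemma cnt_len (t : List Bool) : t.count false + t.count true = t.length := by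
  induction t with
  | nil => rfl
  | cons x t ih => cases x <;> simp [List.count_cons] <;> omega

lemma star_count_false (w : List Bool) :
    (_root_.star w).count false = w.count false + w.count true := by
  induction w with
  | nil => rfl
  | cons x t ih =>
    have := cnt_len t
    cases x <;> simp [_root_.star, List.count_cons, ih] <;> omega

lemma star_eq_nil {w : List Bool} (h : _root_.star w = []) : w = [] := by
  cases w with
  | nil => rfl
  | cons x t => cases x <;> simp [_root_.star] at h

lemma myStar_injective : Function.Injective _root_.star := by
  intro a
  induction a with
  | nil => intro b hb; exact (star_eq_nil hb.symm).symm
  | cons x t ih =>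
    intro b hb
    cases b with
    | nil => exact absurd (star_eq_nil hb) (by simp)
    | cons y s =>
      cases x <;> cases y <;> simp [_root_.star] at hb
      · exact congrArg _ (ih hb)
      · exact congrArg _ (ih hb)

lemma star_rugged (w : List Bool) : Rugged (_root_.star w) := by
  induction w with
  | nil => intro i hi; simp [_root_.star] at hi
  | cons x t ih =>
    intro i hi
    cases x with
    | false =>
      match i with
      | 0 => simp [_root_.star] at hi
      | i + 1 => exact ih i hi
    | true =>
      match i with
      | 0 => rfl
      | 1 => simp [_root_.star] at hi
      | i + 2 => exact ih i hi

lemma rugged_tail {x : Bool} {w : List Bool} (h : Rugged (x :: w)) : Rugged w :=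
  fun i hi => h (i + 1) hi

lemma star_unstar {w : List Bool} (h : Rugged w) : _root_.star (unstar w) = w := by
  induction w using unstar.induct with
  | case1 => rfl
  | case2 w ih => simp [unstar, _root_.star, ih (rugged_tail h)]
  | case3 => exact absurd (h 0 rfl) (by simp)
  | case4 b w ih =>
    have hb : b = false := by have := h 0 rfl; simpa using this
    subst hb
    simp [unstar, _root_.star, ih (rugged_tail (rugged_tail h))]

/-- an `(m,n)`-Dyck path (with `m > n`, `gcd(m,n)=1`) is rugged iff it is
the image of a unique `(m-n,n)`-Dyck path under the insertion map. -/
theorem statement19 (m n : ℕ) (hm : 0 < m) (hn : 0 < n) (hnm : n < m)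
    (h : Nat.Coprime m n) (δ : List Bool) (hδ : IsDyck m n δ) :
    Rugged δ ↔ ∃! γ : List Bool, IsDyck (m - n) n γ ∧ star γ = δ := by
  constructor
  · intro hr
    refine ⟨unstar δ, ⟨?_, star_unstar hr⟩, fun γ' hγ' => myStar_injective (by rw [hγ'.2, star_unstar hr])⟩
    set γ := unstar δ with hγ
    have hst : _root_.star γ = δ := star_unstar hr
    obtain ⟨hcf, hct, hineq⟩ := hδ
    have h1 : γ.count false + γ.count true = m := by
      rw [← star_count_false, hst]; exact hcf
    have h2 : γ.count true = n := by rw [← star_count_true, hst]; exact hct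
    refine ⟨by omega, h2, ?_⟩
    intro p hp
    rw [List.mem_inits _ _] at hp
    have hps : _root_.star p <+: δ := by
      obtain ⟨t, ht⟩ := hp
      exact ⟨_root_.star t, by rw [← star_append_s19, ht, hst]⟩
    have := hineq (_root_.star p) ((List.mem_inits _ _).mpr hps)
    rw [star_count_false, star_count_true] at this
    have hsub : (m - n) * p.count true = m * p.count true - n * p.count true :=
      Nat.sub_mul m n _
    have hmul : n * (p.count false + p.count true) =
        n * p.count false + n * p.count true := Nat.mul_add n _ _
    have hle : n * p.count true ≤ m * p.count true :=
      Nat.mul_le_mul_right _ (le_of_lt hnm)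
    omega
  · rintro ⟨γ, ⟨_, rfl⟩, -⟩
    exact star_rugged γ
end
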